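/- arXiv:1804.11050 — 2 statements merged into one kernel-verified Lean document; each statement's English description precedes it below -/
import Mathlib

section
/- For every integer n ≥ 1, the translate (1,1) + D_n is contained in D_{n+1}. -/
/-!
Let `x ∈ σ` with `(1,1) + x = g + m`, `g ∈ P_{n+1}`, `m ∈ σ`; we find `g' ∈ P_n` with
`x - g' ∈ σ`. Every `q^i` and `r^j` of `P_{n+1}` is `(1,1)` plus a point of `P_n` (a `q^i`, an
`r^j`, or, for the last one, `p_n` resp. `s_n`), so `g' := g - (1,1)` works. The ends `p_{n+1}`
and `s_{n+1}` exceed `p_n` and `s_n` by `0`, `(1,0)` or `(3,4)`, so `x - p_n` resp. `x - s_n`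
lies in `σ` except in two boundary situations: `n` odd and `m` on the edge `3b = 4a` of `σ`, or
`n` even and `m` on the edge `b = 0`; there another point of `P_n` takes over.
-/

open Pointwise

/-- The submonoid `σ_Z ⊂ ℤ²` of pairs `(a,b)` with `0 ≤ b` and `3b ≤ 4a`. -/
def sigmaZ : Set (ℤ × ℤ) := {a : ℤ × ℤ | 0 ≤ a.2 ∧ 3 * a.2 ≤ 4 * a.1}

/-- The point `p_n`. -/
def pPt (n : ℤ) : ℤ × ℤ := if Odd n then ((n + 3) / 2, 0) else (n / 2 + 1, 0)

/-- The point `s_n`. -/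
def sPt (n : ℤ) : ℤ × ℤ :=
  if Odd n then (3 * (n + 1) / 2, 2 * (n + 1)) else (3 * (n + 2) / 2, 2 * (n + 2))

/-- The point `q^i = (n+1-i, n-2i)`. -/
def qPt (n i : ℤ) : ℤ × ℤ := (n + 1 - i, n - 2 * i)

/-- The point `r^j = (n+1+j, n+1+2j)`. -/
def rPt (n j : ℤ) : ℤ × ℤ := (n + 1 + j, n + 1 + 2 * j)

/-- The set `P_n ⊂ ℤ²`. -/
def Pset (n : ℤ) : Set (ℤ × ℤ) :=
  {pPt n, sPt n}
    ∪ {x | ∃ i : ℤ, 0 ≤ i ∧ i ≤ (if Odd n then (n - 1) / 2 else (n - 2) / 2) ∧ x = qPt n i}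
    ∪ {x | ∃ j : ℤ, 0 ≤ j ∧ j ≤ (if Odd n then (n - 1) / 2 else n / 2) ∧ x = rPt n j}

/-- The set `D_n = σ_Z \ (P_n + σ_Z)`, where `+` is pointwise addition of sets. -/
def Dset (n : ℤ) : Set (ℤ × ℤ) := sigmaZ \ (Pset n + sigmaZ)

lemma mem_add_of_sub_mem {G : Type*} [AddCommGroup G] {s t : Set G} {g x : G} (hg : g ∈ s)
    (h : x - g ∈ t) : x ∈ s + t :=
  ⟨g, hg, x - g, h, add_sub_cancel g x⟩

lemma mem_sigmaZ_iff {x : ℤ × ℤ} : x ∈ sigmaZ ↔ 0 ≤ x.2 ∧ 3 * x.2 ≤ 4 * x.1 := Iff.rfl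

lemma add_mem_sigmaZ {x y : ℤ × ℤ} (hx : x ∈ sigmaZ) (hy : y ∈ sigmaZ) : x + y ∈ sigmaZ := by
  rw [mem_sigmaZ_iff] at *
  simp only [Prod.fst_add, Prod.snd_add]
  omega

lemma pPt_eq (n : ℤ) : pPt n = ((n + 3) / 2, 0) := by
  rw [pPt, Prod.ext_iff]
  split_ifs with h <;> rw [Int.odd_iff] at h <;> omega

lemma sPt_eq (n : ℤ) : sPt n = (3 * (n / 2 + 1), 4 * (n / 2 + 1)) := by
  rw [sPt, Prod.ext_iff]
  split_ifs with h <;> rw [Int.odd_iff] at h <;> omega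

lemma mem_Pset_iff {n : ℤ} {x : ℤ × ℤ} :
    x ∈ Pset n ↔ x = pPt n ∨ x = sPt n ∨ (∃ i, 0 ≤ i ∧ 2 * i < n ∧ x = qPt n i) ∨
      ∃ j, 0 ≤ j ∧ 2 * j ≤ n ∧ x = rPt n j := by
  have hq : ∀ i, i ≤ (if Odd n then (n - 1) / 2 else (n - 2) / 2) ↔ 2 * i < n := by
    intro i; split_ifs with h <;> (rw [Int.odd_iff] at h; omega)
  have hr : ∀ j, j ≤ (if Odd n then (n - 1) / 2 else n / 2) ↔ 2 * j ≤ n := by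
    intro j; split_ifs with h <;> (rw [Int.odd_iff] at h; omega)
  simp only [Pset, Set.mem_union, Set.mem_insert_iff, Set.mem_singleton_iff, Set.mem_ofPred_eq,
    hq, hr, or_assoc]

lemma pPt_mem_Pset (n : ℤ) : pPt n ∈ Pset n :=
  mem_Pset_iff.2 <| .inl rfl

lemma sPt_mem_Pset (n : ℤ) : sPt n ∈ Pset n :=
  mem_Pset_iff.2 <| .inr <| .inl rfl

lemma qPt_mem_Pset {n i : ℤ} (h0 : 0 ≤ i) (h : 2 * i < n) : qPt n i ∈ Pset n :=
  mem_Pset_iff.2 <| .inr <| .inr <| .inl ⟨i, h0, h, rfl⟩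

lemma rPt_mem_Pset {n j : ℤ} (h0 : 0 ≤ j) (h : 2 * j ≤ n) : rPt n j ∈ Pset n :=
  mem_Pset_iff.2 <| .inr <| .inr <| .inr ⟨j, h0, h, rfl⟩

/-- For odd `n = 2k+1` these are the points `p_n - (1,1) + t • (3,4)`, which `p_n + σ` misses:
according to the size of `t` they are caught by some `q^i`, some `r^j` or `s_n`. -/
lemma boundary_mem_Pset_add_sigmaZ {k t : ℤ} (hk : 0 ≤ k) (ht : 1 ≤ t) :
    ((k + 1 + 3 * t, 4 * t - 1) : ℤ × ℤ) ∈ Pset (2 * k + 1) + sigmaZ := by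
  rcases le_or_gt (4 * t) (2 * k + 2) with h₁ | h₁
  · refine mem_add_of_sub_mem (qPt_mem_Pset (i := k + 1 - 2 * t) (by omega) (by omega)) ?_
    simp only [mem_sigmaZ_iff, qPt, Prod.mk_sub_mk]; omega
  rcases le_or_gt t (k + 1) with h₂ | h₂
  · refine mem_add_of_sub_mem (rPt_mem_Pset (j := 2 * t - k - 2) (by omega) (by omega)) ?_
    simp only [mem_sigmaZ_iff, rPt, Prod.mk_sub_mk]; omega
  · refine mem_add_of_sub_mem (sPt_mem_Pset _) ?_
    simp only [mem_sigmaZ_iff, sPt_eq, Prod.mk_sub_mk]; omega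

section Translate

variable {n : ℤ} {x m : ℤ × ℤ}

lemma mem_Pset_add_sigmaZ_of_pPt_succ (hn : 0 ≤ n) (hx : x ∈ sigmaZ) (hm : m ∈ sigmaZ)
    (h : pPt (n + 1) + m = (1, 1) + x) : x ∈ Pset n + sigmaZ := by
  obtain ⟨e₁, e₂⟩ := Prod.ext_iff.1 h
  simp only [Prod.fst_add, Prod.snd_add, pPt_eq] at e₁ e₂
  rw [mem_sigmaZ_iff] at hx hm
  by_cases hxp : x - pPt n ∈ sigmaZ
  · exact mem_add_of_sub_mem (pPt_mem_Pset n) hxp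
  simp only [mem_sigmaZ_iff, Prod.fst_sub, Prod.snd_sub, pPt_eq] at hxp
  obtain ⟨k, rfl⟩ : Odd n := by rw [Int.odd_iff]; omega
  obtain ⟨t, rfl⟩ : ∃ t, x = (k + 1 + 3 * t, 4 * t - 1) := ⟨m.2 - m.1, by ext <;> omega⟩
  exact boundary_mem_Pset_add_sigmaZ (by omega) (by omega)

lemma mem_Pset_add_sigmaZ_of_sPt_succ (hn : 0 ≤ n) (hx : x ∈ sigmaZ) (hm : m ∈ sigmaZ)
    (h : sPt (n + 1) + m = (1, 1) + x) : x ∈ Pset n + sigmaZ := by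
  obtain ⟨e₁, e₂⟩ := Prod.ext_iff.1 h
  simp only [Prod.fst_add, Prod.snd_add, sPt_eq] at e₁ e₂
  rw [mem_sigmaZ_iff] at hx hm
  by_cases hxs : x - sPt n ∈ sigmaZ
  · exact mem_add_of_sub_mem (sPt_mem_Pset n) hxs
  simp only [mem_sigmaZ_iff, Prod.fst_sub, Prod.snd_sub, sPt_eq] at hxs
  obtain ⟨k, rfl⟩ : Even n := by rw [Int.even_iff]; omega
  refine mem_add_of_sub_mem (rPt_mem_Pset (j := k) (by omega) (by omega)) ?_
  simp only [mem_sigmaZ_iff, Prod.fst_sub, Prod.snd_sub, rPt]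
  omega

lemma mem_Pset_add_sigmaZ_of_qPt_succ {i : ℤ} (hi0 : 0 ≤ i) (hi : 2 * i < n + 1)
    (hm : m ∈ sigmaZ) (h : qPt (n + 1) i + m = (1, 1) + x) : x ∈ Pset n + sigmaZ := by
  obtain ⟨e₁, e₂⟩ := Prod.ext_iff.1 h
  simp only [Prod.fst_add, Prod.snd_add, qPt] at e₁ e₂
  rw [mem_sigmaZ_iff] at hm
  rcases lt_or_ge (2 * i) n with hi' | hi'
  · refine mem_add_of_sub_mem (qPt_mem_Pset hi0 hi') ?_
    simp only [mem_sigmaZ_iff, Prod.fst_sub, Prod.snd_sub, qPt]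
    omega
  · refine mem_add_of_sub_mem (pPt_mem_Pset n) ?_
    simp only [mem_sigmaZ_iff, Prod.fst_sub, Prod.snd_sub, pPt_eq]
    omega

lemma mem_Pset_add_sigmaZ_of_rPt_succ {j : ℤ} (hj0 : 0 ≤ j) (hj : 2 * j ≤ n + 1)
    (hm : m ∈ sigmaZ) (h : rPt (n + 1) j + m = (1, 1) + x) : x ∈ Pset n + sigmaZ := by
  obtain ⟨e₁, e₂⟩ := Prod.ext_iff.1 h
  simp only [Prod.fst_add, Prod.snd_add, rPt] at e₁ e₂
  rw [mem_sigmaZ_iff] at hm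
  rcases le_or_gt (2 * j) n with hj' | hj'
  · refine mem_add_of_sub_mem (rPt_mem_Pset hj0 hj') ?_
    simp only [mem_sigmaZ_iff, Prod.fst_sub, Prod.snd_sub, rPt]
    omega
  · refine mem_add_of_sub_mem (sPt_mem_Pset n) ?_
    simp only [mem_sigmaZ_iff, Prod.fst_sub, Prod.snd_sub, sPt_eq]
    omega

lemma mem_Pset_add_sigmaZ_of_one_one_add_mem (hn : 0 ≤ n) (hx : x ∈ sigmaZ)
    (h : ((1, 1) : ℤ × ℤ) + x ∈ Pset (n + 1) + sigmaZ) : x ∈ Pset n + sigmaZ := by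
  obtain ⟨g, hg, m, hm, hgm⟩ := h
  rcases mem_Pset_iff.1 hg with rfl | rfl | ⟨i, hi0, hi, rfl⟩ | ⟨j, hj0, hj, rfl⟩
  · exact mem_Pset_add_sigmaZ_of_pPt_succ hn hx hm hgm
  · exact mem_Pset_add_sigmaZ_of_sPt_succ hn hx hm hgm
  · exact mem_Pset_add_sigmaZ_of_qPt_succ hi0 hi hm hgm
  · exact mem_Pset_add_sigmaZ_of_rPt_succ hj0 hj hm hgm

end Translate

theorem translate_Dset_subset_general (n : ℕ) :
    (fun x => ((1, 1) : ℤ × ℤ) + x) '' Dset (n : ℤ) ⊆ Dset ((n : ℤ) + 1) := by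
  rintro _ ⟨x, ⟨hxσ, hxP⟩, rfl⟩
  have h11 : ((1, 1) : ℤ × ℤ) ∈ sigmaZ := by norm_num [mem_sigmaZ_iff]
  exact ⟨add_mem_sigmaZ h11 hxσ,
    fun h => hxP (mem_Pset_add_sigmaZ_of_one_one_add_mem n.cast_nonneg hxσ h)⟩

/-- for every integer `n ≥ 1`, the translate `(1,1) + D_n` is contained
in `D_{n+1}`. -/
theorem translate_Dset_subset (n : ℕ) (hn : 1 ≤ n) :
    (fun x => ((1, 1) : ℤ × ℤ) + x) '' Dset (n : ℤ) ⊆ Dset ((n : ℤ) + 1) :=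
  translate_Dset_subset_general n
end

section
/- The four polynomials g₁ := u³v⁴ + u − 4uv + 2, g₂ := u²v² − 2uv + 1, g₃ := u²v − u − uv + 1 and g₄ := u² − 2u + 1 all lie in J_1 and generate J_1 as an ideal of S; their ≺-leading exponents are (3,4), (2,2), (2,1) and (2,0) respectively, each with leading coefficient 1; and every exponent in the support of each gᵢ other than its leading exponent lies in {(0,0), (1,0), (1,1)} (which is D_1). -/
set_option synthInstance.maxHeartbeats 1000000
set_option maxHeartbeats 1000000

open Pointwise MvPolynomial

/-- The polynomial ring `ℂ[u,v]`. -/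
abbrev CuvPoly : Type := MvPolynomial (Fin 2) ℂ

/-- The variable `u`. -/
noncomputable def uP : CuvPoly := X 0

/-- The variable `v`. -/
noncomputable def vP : CuvPoly := X 1

/-- `S`, the `ℂ`-subalgebra of `ℂ[u,v]` generated by `u`, `u³v⁴` and `uv`. -/
noncomputable def Ssub : Subalgebra ℂ CuvPoly :=
  Algebra.adjoin ℂ {uP, uP ^ 3 * vP ^ 4, uP * vP}

/-- `u` as an element of `S`. -/
noncomputable def U : Ssub := ⟨uP, Algebra.subset_adjoin (by simp)⟩

/-- `u³v⁴` as an element of `S`. -/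
noncomputable def Y : Ssub := ⟨uP ^ 3 * vP ^ 4, Algebra.subset_adjoin (by simp)⟩

/-- `uv` as an element of `S`. -/
noncomputable def UV : Ssub := ⟨uP * vP, Algebra.subset_adjoin (by simp)⟩

/-- The ideal `I = ⟨u−1, u³v⁴−1, uv−1⟩` of `S`. -/
noncomputable def Iid : Ideal Ssub := Ideal.span {U - 1, Y - 1, UV - 1}

/-- The ideal `J_n = I^{n+1}` of `S`. -/
noncomputable def Jid (n : ℕ) : Ideal Ssub := Iid ^ (n + 1)

/-- The monomial ordering `≺` on exponents in `ℤ²`, associated to the matrix with rows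
`(2,-1)` and `(1,1)`: `β ≺ α` iff `2β₁−β₂ < 2α₁−α₂`, or `2β₁−β₂ = 2α₁−α₂` and
`β₁+β₂ < α₁+α₂`. -/
def precLt (b a : ℤ × ℤ) : Prop :=
  2 * b.1 - b.2 < 2 * a.1 - a.2 ∨
    (2 * b.1 - b.2 = 2 * a.1 - a.2 ∧ b.1 + b.2 < a.1 + a.2)

/-- The monomial support of `f ∈ ℂ[u,v]`, as a finite set of points of `ℤ²`. -/
noncomputable def suppZ (f : CuvPoly) : Finset (ℤ × ℤ) :=
  f.support.image (fun m => ((m 0 : ℤ), (m 1 : ℤ)))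

/-- `α` is the `≺`-leading exponent of `f`: it lies in the support of `f` and is
`≺`-greater than every other exponent in the support. -/
def IsLeadExp (f : CuvPoly) (α : ℤ × ℤ) : Prop :=
  α ∈ suppZ f ∧ ∀ β ∈ suppZ f, β ≠ α → precLt β α

/-- The coefficient of the monomial `u^{α₁} v^{α₂}` in `f`. -/
noncomputable def coeffAt (f : CuvPoly) (α : ℤ × ℤ) : ℂ :=
  MvPolynomial.coeff (Finsupp.single 0 α.1.toNat + Finsupp.single 1 α.2.toNat) f

/-- `g₁ = u³v⁴ + u − 4uv + 2` as an element of `S`. -/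
noncomputable def G₁ : Ssub := Y + U - 4 * UV + 2

/-- `g₂ = u²v² − 2uv + 1` as an element of `S`. -/
noncomputable def G₂ : Ssub := UV ^ 2 - 2 * UV + 1

/-- `g₃ = u²v − u − uv + 1` as an element of `S`. -/
noncomputable def G₃ : Ssub := U * UV - U - UV + 1

/-- `g₄ = u² − 2u + 1` as an element of `S`. -/
noncomputable def G₄ : Ssub := U ^ 2 - 2 * U + 1

/-
Write `a = u − 1`, `b = u³v⁴ − 1`, `c = uv − 1`. Then `g₁ = a + b − 4c`, so `I = (a, c, g₁)`,
and the relation `u · u³v⁴ = (uv)⁴` rewrites `g₁` as `c²(c² + 4c + 6) − ab ∈ I²`. Hence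
`I² = (g₁, c², ac, a²) = (g₁, g₂, g₃, g₄)`. The statements about leading exponents are read off
the monomial expansions of the `gᵢ`, and `D_1` is computed from `P_1 = {(2,0), (3,4), (2,1), (2,2)}`.
-/

theorem Ideal.span_triple_sq_eq_span_of_mem {R : Type*} [CommRing R] {a c g : R}
    (hg : g ∈ Ideal.span {a, c, g} ^ 2) :
    Ideal.span {a, c, g} ^ 2 = Ideal.span {g, c * c, a * c, a * a} := by
  apply le_antisymm
  · rw [sq, Ideal.span_mul_span', Ideal.span_le]
    rintro _ ⟨x, hx, y, hy, rfl⟩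
    simp only [Set.mem_insert_iff, Set.mem_singleton_iff] at hx hy
    rcases hx with hx | hx | hx <;> rcases hy with hy | hy | hy <;> rw [hx, hy] <;>
      first
      | (apply Ideal.mul_mem_right; apply Ideal.subset_span; simp; done)
      | (apply Ideal.mul_mem_left; apply Ideal.subset_span; simp; done)
      | (apply Ideal.subset_span; simp [mul_comm])
  · rw [Ideal.span_le]
    rintro _ (rfl | rfl | rfl | rfl)
    · exact hg
    all_goals exact sq (Ideal.span {a, c, g}) ▸
      Ideal.mul_mem_mul (Ideal.subset_span (by simp)) (Ideal.subset_span (by simp))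

lemma U_mul_Y : U * Y = UV ^ 4 :=
  Subtype.ext (show uP * (uP ^ 3 * vP ^ 4) = (uP * vP) ^ 4 by ring)

lemma G₁_eq : G₁ = (U - 1) + (Y - 1) - 4 * (UV - 1) := by
  unfold G₁; ring

lemma Iid_eq_span : Iid = Ideal.span {U - 1, UV - 1, G₁} := by
  have hY : Y - 1 = G₁ - (U - 1) + 4 * (UV - 1) := by rw [G₁_eq]; ring
  unfold Iid
  apply le_antisymm <;> rw [Ideal.span_le] <;> rintro _ (rfl | rfl | rfl)
  · exact Ideal.subset_span (by simp)
  · rw [hY]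
    exact add_mem (sub_mem (Ideal.subset_span (by simp)) (Ideal.subset_span (by simp)))
      (Ideal.mul_mem_left _ _ (Ideal.subset_span (by simp)))
  · exact Ideal.subset_span (by simp)
  · exact Ideal.subset_span (by simp)
  · exact Ideal.subset_span (by simp)
  · rw [G₁_eq]
    exact sub_mem (add_mem (Ideal.subset_span (by simp)) (Ideal.subset_span (by simp)))
      (Ideal.mul_mem_left _ _ (Ideal.subset_span (by simp)))

lemma G₁_mem_Iid_sq : G₁ ∈ Iid ^ 2 := by
  have h : G₁ = (UV - 1) ^ 2 * ((UV - 1) ^ 2 + 4 * (UV - 1) + 6) - (U - 1) * (Y - 1) := by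
    unfold G₁; linear_combination U_mul_Y
  have mem : ∀ x ∈ ({U - 1, Y - 1, UV - 1} : Set Ssub), x ∈ Iid := fun _ hx => Ideal.subset_span hx
  rw [h, sq Iid]
  exact sub_mem
    (Ideal.mul_mem_right _ _ (sq (UV - 1) ▸ Ideal.mul_mem_mul (mem _ (by simp)) (mem _ (by simp))))
    (Ideal.mul_mem_mul (mem _ (by simp)) (mem _ (by simp)))

lemma Jid_one_eq_span : Jid 1 = Ideal.span {G₁, G₂, G₃, G₄} := by
  have h₂ : G₂ = (UV - 1) * (UV - 1) := by unfold G₂; ring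
  have h₃ : G₃ = (U - 1) * (UV - 1) := by unfold G₃; ring
  have h₄ : G₄ = (U - 1) * (U - 1) := by unfold G₄; ring
  rw [Jid, Iid_eq_span, Ideal.span_triple_sq_eq_span_of_mem (Iid_eq_span ▸ G₁_mem_Iid_sq),
    h₂, h₃, h₄]

lemma Finsupp.single_add_single_fin_two_inj {a b c d : ℕ} :
    single (0 : Fin 2) a + single 1 b = single 0 c + single 1 d ↔ a = c ∧ b = d := by
  refine ⟨fun h => ⟨by simpa using DFunLike.congr_fun h 0, by simpa using DFunLike.congr_fun h 1⟩,
    ?_⟩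
  rintro ⟨rfl, rfl⟩
  rfl

lemma mem_suppZ_iff {f : CuvPoly} {β : ℤ × ℤ} :
    β ∈ suppZ f ↔ 0 ≤ β.1 ∧ 0 ≤ β.2 ∧ coeffAt f β ≠ 0 := by
  obtain ⟨p, q⟩ := β
  simp only [suppZ, coeffAt, Finset.mem_image, mem_support_iff]
  constructor
  · rintro ⟨m, hm, hmβ⟩
    obtain ⟨rfl, rfl⟩ := Prod.mk.inj hmβ
    have hm_eq : m = Finsupp.single 0 (m 0) + Finsupp.single 1 (m 1) := by
      ext i; fin_cases i <;> simp
    exact ⟨by positivity, by positivity, by simpa [← hm_eq] using hm⟩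
  · rintro ⟨hp, hq, hc⟩
    exact ⟨_, hc, by simp [hp, hq]⟩

lemma coeffAt_add (f g : CuvPoly) (β : ℤ × ℤ) :
    coeffAt (f + g) β = coeffAt f β + coeffAt g β :=
  coeff_add _ _ _

lemma coeffAt_monomial {β : ℤ × ℤ} (h₁ : 0 ≤ β.1) (h₂ : 0 ≤ β.2) (a b : ℕ) (r : ℂ) :
    coeffAt (monomial (Finsupp.single 0 a + Finsupp.single 1 b) r) β =
      if β = ((a : ℤ), (b : ℤ)) then r else 0 := by
  obtain ⟨p, q⟩ := β
  lift p to ℕ using h₁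
  lift q to ℕ using h₂
  simp [coeffAt, coeff_monomial, Finsupp.single_add_single_fin_two_inj, eq_comm]

lemma suppZ_subset_of_coeffAt_eq_zero {f : CuvPoly} {s : Set (ℤ × ℤ)}
    (h : ∀ β : ℤ × ℤ, 0 ≤ β.1 → 0 ≤ β.2 → β ∉ s → coeffAt f β = 0) : ↑(suppZ f) ⊆ s := by
  intro β hβ
  obtain ⟨h₁, h₂, hc⟩ := mem_suppZ_iff.1 hβ
  by_contra hs
  exact hc (h β h₁ h₂ hs)

lemma isLeadExp_of_suppZ_subset {f : CuvPoly} {α : ℤ × ℤ} {T : Set (ℤ × ℤ)}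
    (hα : coeffAt f α ≠ 0) (hα₁ : 0 ≤ α.1) (hα₂ : 0 ≤ α.2) (hsupp : ↑(suppZ f) ⊆ insert α T)
    (hT : ∀ β ∈ T, precLt β α) : IsLeadExp f α :=
  ⟨mem_suppZ_iff.2 ⟨hα₁, hα₂, hα⟩,
    fun β hβ hne => hT β (Set.mem_of_mem_insert_of_ne (hsupp hβ) hne)⟩

lemma monomial_eq_C_mul_uP_pow_mul_vP_pow (a b : ℕ) (r : ℂ) :
    monomial (Finsupp.single 0 a + Finsupp.single 1 b) r = C r * uP ^ a * vP ^ b := by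
  simp [uP, vP, X_pow_eq_monomial, monomial_mul, C_mul_monomial]

lemma coe_G₁ : (G₁ : CuvPoly) =
    monomial (Finsupp.single 0 3 + Finsupp.single 1 4) 1
      + monomial (Finsupp.single 0 1 + Finsupp.single 1 0) 1
      + monomial (Finsupp.single 0 1 + Finsupp.single 1 1) (-4)
      + monomial (Finsupp.single 0 0 + Finsupp.single 1 0) 2 := by
  simp only [monomial_eq_C_mul_uP_pow_mul_vP_pow, map_neg, map_one, map_ofNat]
  show uP ^ 3 * vP ^ 4 + uP - 4 * (uP * vP) + 2 = _
  ring

lemma coe_G₂ : (G₂ : CuvPoly) =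
    monomial (Finsupp.single 0 2 + Finsupp.single 1 2) 1
      + monomial (Finsupp.single 0 1 + Finsupp.single 1 1) (-2)
      + monomial (Finsupp.single 0 0 + Finsupp.single 1 0) 1 := by
  simp only [monomial_eq_C_mul_uP_pow_mul_vP_pow, map_neg, map_one, map_ofNat]
  show (uP * vP) ^ 2 - 2 * (uP * vP) + 1 = _
  ring

lemma coe_G₃ : (G₃ : CuvPoly) =
    monomial (Finsupp.single 0 2 + Finsupp.single 1 1) 1
      + monomial (Finsupp.single 0 1 + Finsupp.single 1 0) (-1)
      + monomial (Finsupp.single 0 1 + Finsupp.single 1 1) (-1)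
      + monomial (Finsupp.single 0 0 + Finsupp.single 1 0) 1 := by
  simp only [monomial_eq_C_mul_uP_pow_mul_vP_pow, map_neg, map_one]
  show uP * (uP * vP) - uP - uP * vP + 1 = _
  ring

lemma coe_G₄ : (G₄ : CuvPoly) =
    monomial (Finsupp.single 0 2 + Finsupp.single 1 0) 1
      + monomial (Finsupp.single 0 1 + Finsupp.single 1 0) (-2)
      + monomial (Finsupp.single 0 0 + Finsupp.single 1 0) 1 := by
  simp only [monomial_eq_C_mul_uP_pow_mul_vP_pow, map_neg, map_one, map_ofNat]
  show uP ^ 2 - 2 * uP + 1 = _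
  ring

lemma coeffAt_G₁ : coeffAt G₁ (3, 4) = 1 := by
  rw [coe_G₁]
  simp only [coeffAt_add, coeffAt_monomial (β := (3, 4)) (by norm_num) (by norm_num)]
  simp

lemma coeffAt_G₂ : coeffAt G₂ (2, 2) = 1 := by
  rw [coe_G₂]
  simp only [coeffAt_add, coeffAt_monomial (β := (2, 2)) (by norm_num) (by norm_num)]
  simp

lemma coeffAt_G₃ : coeffAt G₃ (2, 1) = 1 := by
  rw [coe_G₃]
  simp only [coeffAt_add, coeffAt_monomial (β := (2, 1)) (by norm_num) (by norm_num)]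
  simp

lemma coeffAt_G₄ : coeffAt G₄ (2, 0) = 1 := by
  rw [coe_G₄]
  simp only [coeffAt_add, coeffAt_monomial (β := (2, 0)) (by norm_num) (by norm_num)]
  simp

lemma suppZ_G₁_subset : ↑(suppZ G₁) ⊆ ({(3, 4), (0, 0), (1, 0), (1, 1)} : Set (ℤ × ℤ)) :=
  suppZ_subset_of_coeffAt_eq_zero fun β h₁ h₂ hβ => by
    simp only [Set.mem_insert_iff, Set.mem_singleton_iff, not_or] at hβ
    rw [coe_G₁]
    simp only [coeffAt_add, coeffAt_monomial h₁ h₂]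
    simp [hβ]

lemma suppZ_G₂_subset : ↑(suppZ G₂) ⊆ ({(2, 2), (0, 0), (1, 0), (1, 1)} : Set (ℤ × ℤ)) :=
  suppZ_subset_of_coeffAt_eq_zero fun β h₁ h₂ hβ => by
    simp only [Set.mem_insert_iff, Set.mem_singleton_iff, not_or] at hβ
    rw [coe_G₂]
    simp only [coeffAt_add, coeffAt_monomial h₁ h₂]
    simp [hβ]

lemma suppZ_G₃_subset : ↑(suppZ G₃) ⊆ ({(2, 1), (0, 0), (1, 0), (1, 1)} : Set (ℤ × ℤ)) :=
  suppZ_subset_of_coeffAt_eq_zero fun β h₁ h₂ hβ => by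
    simp only [Set.mem_insert_iff, Set.mem_singleton_iff, not_or] at hβ
    rw [coe_G₃]
    simp only [coeffAt_add, coeffAt_monomial h₁ h₂]
    simp [hβ]

lemma suppZ_G₄_subset : ↑(suppZ G₄) ⊆ ({(2, 0), (0, 0), (1, 0), (1, 1)} : Set (ℤ × ℤ)) :=
  suppZ_subset_of_coeffAt_eq_zero fun β h₁ h₂ hβ => by
    simp only [Set.mem_insert_iff, Set.mem_singleton_iff, not_or] at hβ
    rw [coe_G₄]
    simp only [coeffAt_add, coeffAt_monomial h₁ h₂]
    simp [hβ]

lemma D₁_precLt {α : ℤ × ℤ} (hα : α ∈ ({(3, 4), (2, 2), (2, 1), (2, 0)} : Set (ℤ × ℤ))) :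
    ∀ β ∈ ({(0, 0), (1, 0), (1, 1)} : Set (ℤ × ℤ)), precLt β α := by
  rcases hα with rfl | rfl | rfl | rfl <;> rintro _ (rfl | rfl | rfl) <;> norm_num [precLt]

lemma Pset_one : Pset 1 = {(2, 0), (3, 4), (2, 1), (2, 2)} := by
  have h_zero : ∀ i : ℤ, 0 ≤ i ∧ i ≤ 0 ↔ i = 0 := fun i => by omega
  ext ⟨a, b⟩
  simp [Pset, pPt, sPt, qPt, rPt, odd_one, ← and_assoc, h_zero]
  omega

lemma mem_add_sigmaZ_iff {P : Set (ℤ × ℤ)} {x : ℤ × ℤ} :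
    x ∈ P + sigmaZ ↔ ∃ p ∈ P, x - p ∈ sigmaZ := by
  simp only [Set.mem_add]
  constructor
  · rintro ⟨p, hp, s, hs, rfl⟩
    exact ⟨p, hp, by simpa using hs⟩
  · rintro ⟨p, hp, hs⟩
    exact ⟨p, hp, x - p, hs, by abel⟩

lemma Dset_one : Dset 1 = {(0, 0), (1, 0), (1, 1)} := by
  ext ⟨a, b⟩
  rw [Dset, Pset_one, Set.mem_sdiff, mem_add_sigmaZ_iff]
  simp only [Set.mem_insert_iff, Set.mem_singleton_iff, or_and_right, exists_or, exists_eq_left,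
    sigmaZ, Set.mem_ofPred_eq, Prod.mk_sub_mk, Prod.mk.injEq]
  -- `omega` alone does not find this: it needs the small values of `b` split off
  obtain hb | rfl | rfl | rfl | rfl | hb : b < 0 ∨ b = 0 ∨ b = 1 ∨ b = 2 ∨ b = 3 ∨ 4 ≤ b := by omega
  all_goals omega

/-- `g₁, g₂, g₃, g₄` all lie in `J_1` and generate `J_1` as an ideal of `S`;
their `≺`-leading exponents are `(3,4)`, `(2,2)`, `(2,1)`, `(2,0)` respectively, each with
leading coefficient `1`; and every other exponent in each support lies in
`{(0,0), (1,0), (1,1)}` (which is `D_1`). -/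
theorem reduced_groebner_basis_J1 :
    (G₁ ∈ Jid 1 ∧ G₂ ∈ Jid 1 ∧ G₃ ∈ Jid 1 ∧ G₄ ∈ Jid 1) ∧
    Jid 1 = Ideal.span {G₁, G₂, G₃, G₄} ∧
    (IsLeadExp (G₁ : CuvPoly) (3, 4) ∧ coeffAt (G₁ : CuvPoly) (3, 4) = 1) ∧
    (IsLeadExp (G₂ : CuvPoly) (2, 2) ∧ coeffAt (G₂ : CuvPoly) (2, 2) = 1) ∧
    (IsLeadExp (G₃ : CuvPoly) (2, 1) ∧ coeffAt (G₃ : CuvPoly) (2, 1) = 1) ∧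
    (IsLeadExp (G₄ : CuvPoly) (2, 0) ∧ coeffAt (G₄ : CuvPoly) (2, 0) = 1) ∧
    (∀ β ∈ suppZ (G₁ : CuvPoly), β ≠ (3, 4) → β ∈ ({(0, 0), (1, 0), (1, 1)} : Set (ℤ × ℤ))) ∧
    (∀ β ∈ suppZ (G₂ : CuvPoly), β ≠ (2, 2) → β ∈ ({(0, 0), (1, 0), (1, 1)} : Set (ℤ × ℤ))) ∧
    (∀ β ∈ suppZ (G₃ : CuvPoly), β ≠ (2, 1) → β ∈ ({(0, 0), (1, 0), (1, 1)} : Set (ℤ × ℤ))) ∧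
    (∀ β ∈ suppZ (G₄ : CuvPoly), β ≠ (2, 0) → β ∈ ({(0, 0), (1, 0), (1, 1)} : Set (ℤ × ℤ))) ∧
    Dset 1 = ({(0, 0), (1, 0), (1, 1)} : Set (ℤ × ℤ)) := by
  have mem_J (g : Ssub) (hg : g ∈ ({G₁, G₂, G₃, G₄} : Set Ssub)) : g ∈ Jid 1 :=
    Jid_one_eq_span ▸ Ideal.subset_span hg
  have lead {f : CuvPoly} {α : ℤ × ℤ} (hα : coeffAt f α = 1) (hα₁ : 0 ≤ α.1) (hα₂ : 0 ≤ α.2)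
      (hsupp : ↑(suppZ f) ⊆ insert α ({(0, 0), (1, 0), (1, 1)} : Set (ℤ × ℤ)))
      (hα_mem : α ∈ ({(3, 4), (2, 2), (2, 1), (2, 0)} : Set (ℤ × ℤ))) :
      IsLeadExp f α ∧ coeffAt f α = 1 :=
    ⟨isLeadExp_of_suppZ_subset (hα ▸ one_ne_zero) hα₁ hα₂ hsupp (D₁_precLt hα_mem), hα⟩
  refine ⟨⟨mem_J _ (by simp), mem_J _ (by simp), mem_J _ (by simp), mem_J _ (by simp)⟩,
    Jid_one_eq_span,
    lead coeffAt_G₁ (by norm_num) (by norm_num) suppZ_G₁_subset (by simp),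
    lead coeffAt_G₂ (by norm_num) (by norm_num) suppZ_G₂_subset (by simp),
    lead coeffAt_G₃ (by norm_num) (by norm_num) suppZ_G₃_subset (by simp),
    lead coeffAt_G₄ (by norm_num) (by norm_num) suppZ_G₄_subset (by simp),
    fun β hβ => Set.mem_of_mem_insert_of_ne (suppZ_G₁_subset hβ),
    fun β hβ => Set.mem_of_mem_insert_of_ne (suppZ_G₂_subset hβ),
    fun β hβ => Set.mem_of_mem_insert_of_ne (suppZ_G₃_subset hβ),
    fun β hβ => Set.mem_of_mem_insert_of_ne (suppZ_G₄_subset hβ),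
    Dset_one⟩
end
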